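/- arXiv:1110.4375 — 3 statements merged into one kernel-verified Lean document; each statement's English description precedes it below -/
import Mathlib

section
/- There exists no 3-stage IMEX Runge-Kutta scheme of type A (i.e., with invertible implicit matrix A, lower triangular with nonzero diagonal, and strictly lower triangular explicit matrix Ã) satisfying the six classical second-order conditions b̃^T𝟏 = 1, b^T𝟏 = 1, b̃^T c̃ = 1/2, b^T c = 1/2, b̃^T c = 1/2, b^T c̃ = 1/2 together with the stiff accuracy conditions b^T A^{-1} = e_3^T and b̃^T = e_3^T Ã. -/
open Matrix

/-- There exists no 3-stage IMEX Runge-Kutta scheme of type A (implicit matrix `A` lower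
triangular with nonzero diagonal, explicit matrix `Ã` strictly lower triangular) satisfying
the six classical second-order conditions together with stiff accuracy `bᵀA⁻¹ = e₃ᵀ` and
`b̃ᵀ = e₃ᵀ Ã`. -/
theorem stmt_1 :
    ¬ ∃ (A Ae : Matrix (Fin 3) (Fin 3) ℝ) (b be : Fin 3 → ℝ),
      (∀ i j : Fin 3, i < j → A i j = 0) ∧
      (∀ i : Fin 3, A i i ≠ 0) ∧
      (∀ i j : Fin 3, i ≤ j → Ae i j = 0) ∧
      (be ⬝ᵥ (fun _ => (1 : ℝ)) = 1) ∧
      (b ⬝ᵥ (fun _ => (1 : ℝ)) = 1) ∧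
      (be ⬝ᵥ (Ae *ᵥ fun _ => (1 : ℝ)) = 1 / 2) ∧
      (b ⬝ᵥ (A *ᵥ fun _ => (1 : ℝ)) = 1 / 2) ∧
      (be ⬝ᵥ (A *ᵥ fun _ => (1 : ℝ)) = 1 / 2) ∧
      (b ⬝ᵥ (Ae *ᵥ fun _ => (1 : ℝ)) = 1 / 2) ∧
      (A⁻¹.vecMul b = Pi.single (2 : Fin 3) 1) ∧
      (be = Ae.vecMul (Pi.single (2 : Fin 3) 1)) := by
  rintro ⟨A, Ae, b, be, hA, hd, hAe, h1, h2, h3, h4, h5, h6, hb, hbe⟩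
  have hA01 := hA 0 1 (by decide)
  have hA02 := hA 0 2 (by decide)
  have hA12 := hA 1 2 (by decide)
  have hAe00 := hAe 0 0 (by decide)
  have hAe01 := hAe 0 1 (by decide)
  have hAe02 := hAe 0 2 (by decide)
  have hAe11 := hAe 1 1 (by decide)
  have hAe12 := hAe 1 2 (by decide)
  have hAe22 := hAe 2 2 (by decide)
  have hdet : A.det ≠ 0 := by
    rw [Matrix.det_fin_three, hA01, hA02, hA12]
    simpa using mul_ne_zero (mul_ne_zero (hd 0) (hd 1)) (hd 2)
  have hbA : b = Matrix.vecMul (Pi.single (2 : Fin 3) 1) A := by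
    rw [← hb, Matrix.vecMul_vecMul, Matrix.nonsing_inv_mul A (Ne.isUnit hdet), Matrix.vecMul_one]
  simp only [hbA, hbe, dotProduct, Matrix.mulVec, Matrix.vecMul,
    Fin.sum_univ_three, Pi.single_apply, hA01, hA02, hA12, hAe00, hAe01, hAe02,
    hAe11, hAe12, hAe22, Fin.reduceEq, reduceIte] at h1 h2 h3 h4 h5 h6
  norm_num at h1 h2 h3 h4 h5 h6
  set p := A 0 0 with hp
  set q := A 1 0
  set r := A 1 1
  set u := A 2 0
  set v := A 2 1
  set w := A 2 2
  set x := Ae 1 0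
  set y := Ae 2 0
  set z := Ae 2 1
  have hpne : p ≠ 0 := hd 0
  have hwne : w ≠ 0 := hd 2
  have k1 : u * p + v * (q + r) - v * x = 0 := by linear_combination h4 - h6 - w * h2 + w * h1
  have k2 : y * p + z * (q + r) - z * x = 0 := by linear_combination h5 - h3
  have k3 : p * (z * u - v * y) = 0 := by linear_combination z * k1 - v * k2
  have k3' : z * u = v * y := by
    have := mul_eq_zero.mp k3
    rcases this with h | h
    · exact absurd h hpne
    · linarith
  have hv : v = z - z * w := by linear_combination (-1) * k3' + z * h2 - v * h1
  have hw : w = 0 := by linear_combination 2 * h6 - 2 * h3 - 2 * w * h1 - 2 * x * hv + 2 * w * h3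
  exact hwne hw
end

section
/- Let ε > 0, ξ ≠ 0, μ ∈ [0,1] with μ ≠ 1, and suppose 2ε|ξ| < 1. Then the cubic polynomial P(Δt) = -ξ⁴(μ-1)²Δt³ + 2ξ²(2ε²ξ²μ + 1 - μ)Δt² + (4ε²ξ² - 1)Δt in Δt has roots 0 and T_± = [2ε²ξ²μ - μ + 1 ± 2εξ√(ε²ξ²μ² - μ + 1)] / ((μ-1)²ξ²), and both T_+ and T_- are positive real numbers (the discriminant ε²ξ²μ² - μ + 1 being positive). -/
/-! `P(t) = t Q(t)` with `Q` quadratic, and the reduced discriminant of `Q` is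
`4 ε² ξ⁶ (ε²ξ²μ² - μ + 1)`, which gives the roots `T±`. Both are positive because their common
numerator part `B = 2ε²ξ²μ - μ + 1` satisfies `B² - 4ε²ξ² (ε²ξ²μ² - μ + 1) = (1 - μ)² (1 - 4ε²ξ²)`,
so the CFL condition `2ε|ξ| < 1` forces `|2εξ √(ε²ξ²μ² - μ + 1)| < B`. -/

def stabilityPoly (ε ξ μ t : ℝ) : ℝ :=
  -ξ ^ 4 * (μ - 1) ^ 2 * t ^ 3 + 2 * ξ ^ 2 * (2 * ε ^ 2 * ξ ^ 2 * μ + 1 - μ) * t ^ 2 +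
    (4 * ε ^ 2 * ξ ^ 2 - 1) * t

lemma stabilityPoly_div_eq_zero {ε ξ μ s : ℝ} (hξ : ξ ≠ 0) (hμ : μ ≠ 1)
    (hs : s ^ 2 = ε ^ 2 * ξ ^ 2 * μ ^ 2 - μ + 1) :
    stabilityPoly ε ξ μ
      ((2 * ε ^ 2 * ξ ^ 2 * μ - μ + 1 + 2 * ε * ξ * s) / ((μ - 1) ^ 2 * ξ ^ 2)) = 0 := by
  have : μ - 1 ≠ 0 := sub_ne_zero.mpr hμ
  unfold stabilityPoly
  field_simp
  linear_combination (-4 * ε ^ 2 * ξ ^ 2 * (2 * ε ^ 2 * ξ ^ 2 * μ - μ + 1 + 2 * ε * ξ * s)) * hs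

lemma discriminant_pos (c : ℝ) {μ : ℝ} (hμ : μ < 1) : 0 < c ^ 2 * μ ^ 2 - μ + 1 := by
  nlinarith [sq_nonneg (c * μ)]

lemma abs_two_mul_sqrt_discriminant_lt {c μ : ℝ} (hc : |2 * c| < 1) (hμ : μ < 1) :
    |2 * c * √(c ^ 2 * μ ^ 2 - μ + 1)| < 2 * c ^ 2 * μ - μ + 1 := by
  have hc2 : 4 * c ^ 2 < 1 := by nlinarith [sq_abs (2 * c), abs_nonneg (2 * c)]
  have hB : 0 < 2 * c ^ 2 * μ - μ + 1 := by nlinarith [sq_nonneg c]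
  refine abs_lt_of_sq_lt_sq ?_ hB.le
  rw [mul_pow, Real.sq_sqrt (discriminant_pos c hμ).le]
  nlinarith [mul_pos (pow_pos (sub_pos.mpr hμ) 2) (sub_pos.mpr hc2)]

/-- Roots of the cubic stability polynomial (8.8): under `2ε|ξ| < 1` the discriminant
`ε²ξ²μ² - μ + 1` is positive, `0`, `T₊` and `T₋` are roots, and `T₊, T₋ > 0`. -/
theorem stmt_5 (ε ξ μ : ℝ) (hε : 0 < ε) (hξ : ξ ≠ 0)
    (hμ : μ ∈ Set.Icc (0 : ℝ) 1) (hμ1 : μ ≠ 1)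
    (hcfl : 2 * ε * |ξ| < 1) :
    0 < ε ^ 2 * ξ ^ 2 * μ ^ 2 - μ + 1 ∧
    (let P : ℝ → ℝ := fun t =>
        -ξ ^ 4 * (μ - 1) ^ 2 * t ^ 3 + 2 * ξ ^ 2 * (2 * ε ^ 2 * ξ ^ 2 * μ + 1 - μ) * t ^ 2 +
          (4 * ε ^ 2 * ξ ^ 2 - 1) * t
     let Tp : ℝ := (2 * ε ^ 2 * ξ ^ 2 * μ - μ + 1 +
        2 * ε * ξ * Real.sqrt (ε ^ 2 * ξ ^ 2 * μ ^ 2 - μ + 1)) / ((μ - 1) ^ 2 * ξ ^ 2)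
     let Tm : ℝ := (2 * ε ^ 2 * ξ ^ 2 * μ - μ + 1 -
        2 * ε * ξ * Real.sqrt (ε ^ 2 * ξ ^ 2 * μ ^ 2 - μ + 1)) / ((μ - 1) ^ 2 * ξ ^ 2)
     P 0 = 0 ∧ P Tp = 0 ∧ P Tm = 0 ∧ 0 < Tp ∧ 0 < Tm) := by
  have hμlt : μ < 1 := lt_of_le_of_ne hμ.2 hμ1
  have hc : |2 * (ε * ξ)| < 1 := by
    rwa [abs_mul, abs_mul, abs_two, abs_of_pos hε, ← mul_assoc]
  have hD := discriminant_pos (ε * ξ) hμlt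
  have hbound := abs_lt.mp (abs_two_mul_sqrt_discriminant_lt hc hμlt)
  simp only [mul_pow, ← mul_assoc] at hD hbound
  have hden : 0 < (μ - 1) ^ 2 * ξ ^ 2 := by
    have := sub_ne_zero.mpr hμ1
    positivity
  have hs := Real.sq_sqrt hD.le
  refine ⟨hD, by ring, stabilityPoly_div_eq_zero hξ hμ1 hs, ?_, ?_, ?_⟩
  · have := stabilityPoly_div_eq_zero hξ hμ1 (ε := ε) (s := -√(ε ^ 2 * ξ ^ 2 * μ ^ 2 - μ + 1))
      (by rw [neg_sq, hs])
    rwa [mul_neg, ← sub_eq_add_neg] at this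
  · exact div_pos (by linarith) hden
  · exact div_pos (by linarith) hden
end

section
/- For an implicit Runge-Kutta scheme of CK type with Butcher matrix A = [[0, 0],[a, Â]] where Â ∈ ℝ^{(s-1)×(s-1)} is invertible and a ∈ ℝ^{s-1}, and weights (b_1, b̂) with b̂^T Â^{-1} = ê_{s-1}^T (stiff accuracy of the last rows), the stability function R(z) = 1 + z(b_1 + b̂^T(I - zÂ)^{-1}(𝟏_{s-1} + z a)) satisfies lim_{z→∞} R(z) = -ê_{s-1}^T Â^{-1} a, provided additionally b_1 + b̂^T α = 0 where α = -Â^{-1}a. In particular if ê_{s-1}^T Â^{-1} a = 0 then R(∞) = 0. -/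
open Matrix Filter

/-- Algebraic identity: when `I - zÂ` is invertible, stiff accuracy and the
consistency condition reduce the stability function to
`1 - êᵀw + êᵀ(I - zÂ)⁻¹w` with `w = 𝟏 + Â⁻¹a`. -/
private lemma key_alg {m : ℕ} (Ah : Matrix (Fin m) (Fin m) ℝ) (a bh e : Fin m → ℝ) (b1 : ℝ)
    (hAh : IsUnit Ah.det)
    (hsa : Ah⁻¹.vecMul bh = e)
    (hb1 : b1 + bh ⬝ᵥ (-(Ah⁻¹ *ᵥ a)) = 0)
    (z : ℝ) (hB : IsUnit (1 - z • Ah).det) :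
    1 + z * (b1 + bh ⬝ᵥ ((1 - z • Ah)⁻¹ *ᵥ (fun i => 1 + z * a i)))
      = 1 - e ⬝ᵥ (fun i => 1 + (Ah⁻¹ *ᵥ a) i)
        + e ⬝ᵥ ((1 - z • Ah)⁻¹ *ᵥ (fun i => 1 + (Ah⁻¹ *ᵥ a) i)) := by
  set B : Matrix (Fin m) (Fin m) ℝ := 1 - z • Ah with hBdef
  set v1 : Fin m → ℝ := Ah⁻¹ *ᵥ a with hv1
  set w : Fin m → ℝ := fun i => 1 + v1 i with hw
  have hA2 : Ah * Ah⁻¹ = 1 := Matrix.mul_nonsing_inv Ah hAh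
  have hA1 : Ah⁻¹ * Ah = 1 := Matrix.nonsing_inv_mul Ah hAh
  have hB1 : B⁻¹ * B = 1 := Matrix.nonsing_inv_mul B hB
  have hB2 : B * B⁻¹ = 1 := Matrix.mul_nonsing_inv B hB
  have hcomm : B * Ah⁻¹ = Ah⁻¹ * B := by
    simp only [hBdef, Matrix.sub_mul, Matrix.mul_sub, Matrix.one_mul, Matrix.mul_one,
      Matrix.smul_mul, Matrix.mul_smul, hA1, hA2]
  set u : Fin m → ℝ := z • (-v1) + (Ah⁻¹ *ᵥ (B⁻¹ *ᵥ w) - Ah⁻¹ *ᵥ w) with hu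
  have hBv1 : B *ᵥ v1 = v1 - z • a := by
    rw [hBdef, Matrix.sub_mulVec, Matrix.one_mulVec, Matrix.smul_mulVec, hv1,
      Matrix.mulVec_mulVec, hA2, Matrix.one_mulVec]
  have hBu : B *ᵥ u = z • (fun i => 1 + z * a i) := by
    have h2 : B *ᵥ (Ah⁻¹ *ᵥ (B⁻¹ *ᵥ w)) = Ah⁻¹ *ᵥ w := by
      rw [Matrix.mulVec_mulVec, Matrix.mulVec_mulVec, hcomm, Matrix.mul_assoc, hB2,
        Matrix.mul_one]
    have h3 : B *ᵥ (Ah⁻¹ *ᵥ w) = Ah⁻¹ *ᵥ w - z • w := by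
      rw [hBdef, Matrix.sub_mulVec, Matrix.one_mulVec, Matrix.smul_mulVec,
        Matrix.mulVec_mulVec, hA2, Matrix.one_mulVec]
    rw [hu, Matrix.mulVec_add, Matrix.mulVec_sub, Matrix.mulVec_smul, h2, h3,
      Matrix.mulVec_neg, hBv1]
    funext i
    simp [hw, hv1]
    ring
  have huu : z • (B⁻¹ *ᵥ (fun i => 1 + z * a i)) = u := by
    rw [← Matrix.mulVec_smul, ← hBu, Matrix.mulVec_mulVec, hB1, Matrix.one_mulVec]
  have hdp : ∀ x : Fin m → ℝ, bh ⬝ᵥ (Ah⁻¹ *ᵥ x) = e ⬝ᵥ x := fun x => by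
    rw [Matrix.dotProduct_mulVec, hsa]
  have hmain : z * (bh ⬝ᵥ ((1 - z • Ah)⁻¹ *ᵥ (fun i => 1 + z * a i)))
      = z * (bh ⬝ᵥ (-v1)) + (e ⬝ᵥ (B⁻¹ *ᵥ w) - e ⬝ᵥ w) := by
    rw [← smul_eq_mul, ← dotProduct_smul, ← hBdef, huu, hu]
    rw [dotProduct_add, dotProduct_sub, dotProduct_smul, hdp, hdp]
    simp only [smul_eq_mul]
    try ring
  rw [mul_add, hmain]
  have : z * b1 + z * (bh ⬝ᵥ (-v1)) = 0 := by
    rw [← mul_add, hb1, mul_zero]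
  linarith [this]

/-- For a CK-type implicit scheme with invertible submatrix `Â`, stiff accuracy
`b̂ᵀÂ⁻¹ = ê` and `b₁ + b̂ᵀα = 0` (with `α = -Â⁻¹a`), the stability function
`R(z) = 1 + z(b₁ + b̂ᵀ(I - zÂ)⁻¹(𝟏 + z a))` tends to `-êᵀÂ⁻¹a` as `z → ∞`;
in particular, if `êᵀÂ⁻¹a = 0` then `R(∞) = 0`. -/
theorem stmt_9 (n : ℕ) (Ah : Matrix (Fin (n + 1)) (Fin (n + 1)) ℝ)
    (a bh : Fin (n + 1) → ℝ) (b1 : ℝ)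
    (hAh : IsUnit Ah.det)
    (hsa : Ah⁻¹.vecMul bh = Pi.single (Fin.last n) 1)
    (hb1 : b1 + bh ⬝ᵥ (-(Ah⁻¹ *ᵥ a)) = 0) :
    Tendsto (fun z : ℝ =>
        1 + z * (b1 + bh ⬝ᵥ ((1 - z • Ah)⁻¹ *ᵥ (fun i => 1 + z * a i))))
      atTop (nhds (-(Pi.single (Fin.last n) 1 ⬝ᵥ (Ah⁻¹ *ᵥ a)))) ∧
    (Pi.single (Fin.last n) 1 ⬝ᵥ (Ah⁻¹ *ᵥ a) = 0 →
      Tendsto (fun z : ℝ =>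
          1 + z * (b1 + bh ⬝ᵥ ((1 - z • Ah)⁻¹ *ᵥ (fun i => 1 + z * a i))))
        atTop (nhds 0)) := by
  set e : Fin (n + 1) → ℝ := Pi.single (Fin.last n) 1 with he
  set c : ℝ := e ⬝ᵥ (Ah⁻¹ *ᵥ a) with hc
  set w : Fin (n + 1) → ℝ := fun i => 1 + (Ah⁻¹ *ᵥ a) i with hw
  have hew : e ⬝ᵥ w = 1 + c := by
    rw [he, single_dotProduct, hw, hc, he, single_dotProduct]
    ring
  -- the auxiliary continuous functions of t = z⁻¹
  set d : ℝ → ℝ := fun t => (t • (1 : Matrix (Fin (n+1)) (Fin (n+1)) ℝ) - Ah).det with hd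
  set g : ℝ → ℝ :=
    fun t => e ⬝ᵥ ((t • (1 : Matrix (Fin (n+1)) (Fin (n+1)) ℝ) - Ah).adjugate *ᵥ w) with hg
  have hcont : Continuous fun t : ℝ => t • (1 : Matrix (Fin (n+1)) (Fin (n+1)) ℝ) - Ah :=
    (continuous_id.smul continuous_const).sub continuous_const
  have hdcont : Continuous d := hcont.matrix_det
  have hgcont : Continuous g :=
    continuous_const.dotProduct (hcont.matrix_adjugate.matrix_mulVec continuous_const)
  have hd0 : d 0 ≠ 0 := by
    have : d 0 = (-Ah).det := by simp [hd]
    rw [this, Matrix.det_neg]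
    simp only [ne_eq, mul_eq_zero, not_or]
    constructor
    · positivity
    · exact hAh.ne_zero
  have hinv : Tendsto (fun z : ℝ => z⁻¹) atTop (nhds 0) := tendsto_inv_atTop_zero
  have hdz : Tendsto (fun z : ℝ => d z⁻¹) atTop (nhds (d 0)) :=
    (hdcont.tendsto 0).comp hinv
  have hgz : Tendsto (fun z : ℝ => g z⁻¹) atTop (nhds (g 0)) :=
    (hgcont.tendsto 0).comp hinv
  -- eventual identity
  have hev : ∀ᶠ z : ℝ in atTop,
      1 + z * (b1 + bh ⬝ᵥ ((1 - z • Ah)⁻¹ *ᵥ (fun i => 1 + z * a i)))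
        = -c + z⁻¹ * ((d z⁻¹)⁻¹ * g z⁻¹) := by
    filter_upwards [hdz.eventually_ne hd0, eventually_gt_atTop (0 : ℝ)] with z hdzne hz0
    have hz : z ≠ 0 := ne_of_gt hz0
    set C : Matrix (Fin (n+1)) (Fin (n+1)) ℝ :=
      z⁻¹ • (1 : Matrix (Fin (n+1)) (Fin (n+1)) ℝ) - Ah with hC
    have hCdet : C.det = d z⁻¹ := rfl
    have hCunit : IsUnit C.det := by
      rw [hCdet]; exact isUnit_iff_ne_zero.mpr hdzne
    have hBC : 1 - z • Ah = z • C := by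
      rw [hC, smul_sub, smul_smul, mul_inv_cancel₀ hz, one_smul]
    have hBunit : IsUnit (1 - z • Ah).det := by
      rw [hBC, Matrix.det_smul]
      exact isUnit_iff_ne_zero.mpr (by
        simp only [ne_eq, mul_eq_zero, not_or]
        exact ⟨pow_ne_zero _ hz, hCdet ▸ hdzne⟩)
    have hkey := key_alg Ah a bh e b1 hAh hsa hb1 z hBunit
    have hBinv : (1 - z • Ah)⁻¹ = z⁻¹ • C⁻¹ := by
      apply Matrix.inv_eq_right_inv
      rw [hBC, Matrix.smul_mul, Matrix.mul_smul, smul_smul, mul_inv_cancel₀ hz,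
        Matrix.mul_nonsing_inv C hCunit, one_smul]
    have hCinv : C⁻¹ = (d z⁻¹)⁻¹ • C.adjugate := by
      rw [Matrix.inv_def, Ring.inverse_eq_inv, hCdet]
    have heB : e ⬝ᵥ ((1 - z • Ah)⁻¹ *ᵥ w) = z⁻¹ * ((d z⁻¹)⁻¹ * g z⁻¹) := by
      rw [hBinv, hCinv, Matrix.smul_mulVec, Matrix.smul_mulVec,
        dotProduct_smul, dotProduct_smul, smul_eq_mul, smul_eq_mul, hg]
    calc 1 + z * (b1 + bh ⬝ᵥ ((1 - z • Ah)⁻¹ *ᵥ (fun i => 1 + z * a i)))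
        = 1 - e ⬝ᵥ w + e ⬝ᵥ ((1 - z • Ah)⁻¹ *ᵥ w) := hkey
      _ = -c + z⁻¹ * ((d z⁻¹)⁻¹ * g z⁻¹) := by rw [hew, heB]; ring
  have hlim : Tendsto (fun z : ℝ => -c + z⁻¹ * ((d z⁻¹)⁻¹ * g z⁻¹)) atTop (nhds (-c)) := by
    have h1 : Tendsto (fun z : ℝ => z⁻¹ * ((d z⁻¹)⁻¹ * g z⁻¹)) atTop
        (nhds (0 * ((d 0)⁻¹ * g 0))) := hinv.mul ((hdz.inv₀ hd0).mul hgz)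
    rw [zero_mul] at h1
    simpa using (tendsto_const_nhds.add h1)
  have hmain : Tendsto (fun z : ℝ =>
      1 + z * (b1 + bh ⬝ᵥ ((1 - z • Ah)⁻¹ *ᵥ (fun i => 1 + z * a i))))
      atTop (nhds (-c)) := Tendsto.congr' (hev.mono fun z hz => hz.symm) hlim
  refine ⟨hmain, fun hczero => ?_⟩
  simpa [hczero] using hmain
end
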